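/- arXiv:1704.02869 — 5 statements merged into one kernel-verified Lean document; each statement's English description precedes it below -/
import Mathlib

section
/- For every tree G of order n ≥ 2, the J-chromatic number of G equals 2; that is, G admits a maximal proper vertex colouring in which every vertex's closed neighbourhood meets every colour class, and the maximum number of colours in such a colouring is 2. -/
open SimpleGraph

/-- A proper colouring of `G` with `k` colours in which every vertex's closed
neighbourhood meets every colour class (a J-colouring). -/
def IsJCol {V : Type*} (G : SimpleGraph V) {k : ℕ} (c : V → Fin k) : Prop :=
  (∀ u v, G.Adj u v → c u ≠ c v) ∧
  (∀ v : V, ∀ i : Fin k, ∃ u, (u = v ∨ G.Adj v u) ∧ c u = i)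

/-- `G` admits a J-colouring with `k` colours. -/
def HasJCol {V : Type*} (G : SimpleGraph V) (k : ℕ) : Prop :=
  ∃ c : V → Fin k, IsJCol G c

/-- The J-chromatic number: the maximum number of colours in a J-colouring. -/
noncomputable def Jnum {V : Type*} (G : SimpleGraph V) : ℕ :=
  sSup {k | HasJCol G k}

/-- A proper colouring in which every internal vertex (degree ≥ 2) has its closed
neighbourhood meeting every colour class (a J*-colouring). -/
def IsJStarCol {V : Type*} (G : SimpleGraph V) {k : ℕ} (c : V → Fin k) : Prop :=
  (∀ u v, G.Adj u v → c u ≠ c v) ∧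
  (∀ v : V, (∃ a b, a ≠ b ∧ G.Adj v a ∧ G.Adj v b) →
    ∀ i : Fin k, ∃ u, (u = v ∨ G.Adj v u) ∧ c u = i)

/-- `G` admits a J*-colouring with `k` colours. -/
def HasJStarCol {V : Type*} (G : SimpleGraph V) (k : ℕ) : Prop :=
  ∃ c : V → Fin k, IsJStarCol G c

/-- The modified J-chromatic number. -/
noncomputable def JStarNum {V : Type*} (G : SimpleGraph V) : ℕ :=
  sSup {k | HasJStarCol G k}

/-
A tree is bipartite and, having at least two vertices, has no isolated vertex, so each closed
neighbourhood contains both colours of a proper 2-colouring: that colouring is a J-colouring.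
Conversely, the closed neighbourhood of a vertex must meet all `k` colour classes, so
`k ≤ deg v + 1` for every vertex `v`; a leaf gives `k ≤ 2`.
-/

section JColouring

variable {V : Type*} {G : SimpleGraph V}

lemma SimpleGraph.Coloring.isJCol_of_forall_exists_adj (C : G.Coloring (Fin 2))
    (hG : ∀ v, ∃ u, G.Adj v u) : IsJCol G C := by
  refine ⟨fun u v huv => C.valid huv, fun v i => ?_⟩
  obtain ⟨u, hvu⟩ := hG v
  by_cases hi : C v = i
  · exact ⟨v, Or.inl rfl, hi⟩
  · refine ⟨u, Or.inr hvu, ?_⟩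
    have hne : C v ≠ C u := C.valid hvu
    omega

lemma hasJCol_two_of_colorable_two (hC : G.Colorable 2) (hG : ∀ v, ∃ u, G.Adj v u) :
    HasJCol G 2 := by
  obtain ⟨C⟩ := hC
  exact ⟨C, C.isJCol_of_forall_exists_adj hG⟩

lemma IsJCol.le_degree_add_one [DecidableEq V] {k : ℕ} {c : V → Fin k} (hc : IsJCol G c)
    (v : V) [Fintype (G.neighborSet v)] : k ≤ G.degree v + 1 := by
  have hcover : (Finset.univ : Finset (Fin k)) ⊆ (insert v (G.neighborFinset v)).image c := by
    intro i _
    obtain ⟨u, hu, rfl⟩ := hc.2 v i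
    rcases hu with rfl | hvu
    · exact Finset.mem_image_of_mem c (Finset.mem_insert_self _ _)
    · exact Finset.mem_image_of_mem c (Finset.mem_insert_of_mem ((mem_neighborFinset G v u).2 hvu))
  calc k = (Finset.univ : Finset (Fin k)).card := (Finset.card_fin k).symm
    _ ≤ ((insert v (G.neighborFinset v)).image c).card := Finset.card_le_card hcover
    _ ≤ (insert v (G.neighborFinset v)).card := Finset.card_image_le
    _ ≤ (G.neighborFinset v).card + 1 := Finset.card_insert_le _ _
    _ = G.degree v + 1 := by rw [card_neighborFinset_eq_degree]

lemma Jnum_eq_of_hasJCol_of_forall_le {m : ℕ} (hm : HasJCol G m)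
    (hle : ∀ k, HasJCol G k → k ≤ m) : Jnum G = m :=
  IsGreatest.csSup_eq ⟨hm, hle⟩

end JColouring

/-- Every tree of order at least 2 has J-chromatic number 2. -/
theorem tree_Jnum_eq_two {V : Type*} [Fintype V] (G : SimpleGraph V)
    (hT : G.IsTree) (hn : 2 ≤ Fintype.card V) :
    HasJCol G 2 ∧ Jnum G = 2 := by
  classical
  have : Nontrivial V := Fintype.one_lt_card_iff_nontrivial.mp hn
  have hJ2 : HasJCol G 2 :=
    hasJCol_two_of_colorable_two hT.colorable_two hT.connected.preconnected.exists_adj_of_nontrivial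
  obtain ⟨leaf, hleaf⟩ := hT.exists_vert_degree_one_of_nontrivial
  refine ⟨hJ2, Jnum_eq_of_hasJCol_of_forall_le hJ2 fun k ⟨c, hc⟩ => ?_⟩
  simpa [hleaf] using hc.le_degree_add_one leaf
end

section
/- If H admits a J-colouring, then the corona K_1 ∘ H admits a J-colouring and J(K_1 ∘ H) = J(H) + 1. -/
open SimpleGraph

/-- The corona `K₁ ∘ H`: a new vertex (`none`) adjacent to every vertex of `H`. -/
def coneGraph {W : Type*} (H : SimpleGraph W) : SimpleGraph (Option W) where
  Adj x y :=
    match x, y with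
    | none, some _ => True
    | some _, none => True
    | some a, some b => H.Adj a b
    | none, none => False
  symm := by constructor; rintro (_ | a) (_ | b) h <;> simp_all <;> exact h.symm
  loopless := by constructor; rintro (_ | a) h <;> simp_all

/-!
The apex of `K₁ ∘ H` is adjacent to every other vertex, so in a J-colouring of `K₁ ∘ H` its
colour occurs nowhere else, and deleting the apex leaves a J-colouring of `H` with one colour
fewer. Conversely, a J-colouring of a nonempty graph uses every colour, so giving the apex a
fresh colour extends a J-colouring of `H` with `k` colours to one of `K₁ ∘ H` with `k + 1`.
-/

section JColouring

variable {V : Type*} {G : SimpleGraph V} {k : ℕ}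

theorem IsJCol.surjective [Nonempty V] {c : V → Fin k} (hc : IsJCol G c) :
    Function.Surjective c := fun i =>
  let ⟨u, _, hu⟩ := hc.2 (Classical.arbitrary V) i
  ⟨u, hu⟩

theorem HasJCol.le_card [Fintype V] [Nonempty V] (h : HasJCol G k) : k ≤ Fintype.card V := by
  obtain ⟨c, hc⟩ := h
  simpa using Fintype.card_le_of_surjective c hc.surjective

theorem isGreatest_Jnum [Fintype V] [Nonempty V] (h : ∃ k, HasJCol G k) :
    IsGreatest {k | HasJCol G k} (Jnum G) :=
  have hbdd : BddAbove {k | HasJCol G k} := ⟨Fintype.card V, fun _ hk => hk.le_card⟩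
  ⟨Nat.sSup_mem h hbdd, fun _ hk => le_csSup hbdd hk⟩

/-- On the empty graph every `k` admits a J-colouring, so `Jnum` takes the junk value
`sSup` of an unbounded set. -/
theorem Jnum_eq_zero_of_isEmpty [IsEmpty V] (G : SimpleGraph V) : Jnum G = 0 := by
  have hall : ∀ k, HasJCol G k := fun _ => ⟨isEmptyElim, isEmptyElim, isEmptyElim⟩
  have hunbdd : ¬BddAbove {k | HasJCol G k} := fun ⟨b, hb⟩ =>
    (Nat.lt_succ_self b).not_ge (hb (hall (b + 1)))
  rw [Jnum, csSup_of_not_bddAbove hunbdd, csSup_empty]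
  rfl

end JColouring

section Cone

variable {W : Type*} {H : SimpleGraph W} {k : ℕ}

theorem hasJCol_coneGraph_succ {c : W → Fin k} (hc : IsJCol H c) (hs : Function.Surjective c) :
    HasJCol (coneGraph H) (k + 1) := by
  refine ⟨fun x => x.elim (Fin.last k) fun w => (c w).castSucc, ?_, ?_⟩
  · rintro (_ | u) (_ | v) h
    · exact h.elim
    · exact (Fin.castSucc_lt_last (c v)).ne'
    · exact (Fin.castSucc_lt_last (c u)).ne
    · simpa [Fin.castSucc_inj] using hc.1 u v h
  · rintro (_ | v) i <;> rcases eq_or_ne i (Fin.last k) with rfl | hi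
    · exact ⟨none, Or.inl rfl, rfl⟩
    · obtain ⟨j, rfl⟩ := Fin.exists_castSucc_eq.mpr hi
      obtain ⟨w, rfl⟩ := hs j
      exact ⟨some w, Or.inr trivial, rfl⟩
    · exact ⟨none, Or.inr trivial, rfl⟩
    · obtain ⟨j, rfl⟩ := Fin.exists_castSucc_eq.mpr hi
      obtain ⟨u, hu, rfl⟩ := hc.2 v j
      exact ⟨some u, hu.imp (congrArg some) id, rfl⟩

theorem HasJCol.of_coneGraph_succ (h : HasJCol (coneGraph H) (k + 1)) : HasJCol H k := by
  obtain ⟨c, hproper, hcover⟩ := h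
  have hapex : ∀ w, c (some w) ≠ c none := fun w => hproper _ _ trivial
  -- `succAbove (c none)` identifies `Fin k` with the colours other than the apex colour.
  choose c' hc' using fun w => Fin.exists_succAbove_eq (hapex w)
  refine ⟨c', fun u v huv heq => hproper (some u) (some v) huv (by rw [← hc', ← hc', heq]), ?_⟩
  intro v j
  obtain ⟨_ | u, hu, hcu⟩ := hcover (some v) ((c none).succAbove j)
  · exact absurd hcu.symm (Fin.succAbove_ne _ _)
  · refine ⟨u, hu.imp Option.some.inj id, ?_⟩
    rwa [← hc', Fin.succAbove_right_inj] at hcu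

end Cone

/-- If `H` admits a J-colouring then so does `K₁ ∘ H`, and `J(K₁ ∘ H) = J(H) + 1`. -/
theorem coneGraph_Jnum {W : Type*} [Fintype W] (H : SimpleGraph W)
    (hH : ∃ k, HasJCol H k) :
    (∃ k, HasJCol (coneGraph H) k) ∧ Jnum (coneGraph H) = Jnum H + 1 := by
  rcases isEmpty_or_nonempty W with hW | hW
  · have hcone : HasJCol (coneGraph H) 1 :=
      hasJCol_coneGraph_succ (c := isEmptyElim) ⟨isEmptyElim, isEmptyElim⟩ isEmptyElim
    have hmax : IsGreatest {k | HasJCol (coneGraph H) k} 1 :=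
      ⟨hcone, fun _ hk => by simpa using hk.le_card⟩
    exact ⟨⟨1, hcone⟩, by rw [Jnum, hmax.csSup_eq, Jnum_eq_zero_of_isEmpty]⟩
  · obtain ⟨⟨c, hc⟩, hJ⟩ := isGreatest_Jnum hH
    have hcone : HasJCol (coneGraph H) (Jnum H + 1) := hasJCol_coneGraph_succ hc hc.surjective
    have hmax : IsGreatest {k | HasJCol (coneGraph H) k} (Jnum H + 1) := by
      refine ⟨hcone, ?_⟩
      rintro (_ | k) hk
      · exact Nat.zero_le _
      · exact Nat.succ_le_succ (hJ hk.of_coneGraph_succ)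
    exact ⟨⟨_, hcone⟩, hmax.csSup_eq⟩
end

section
/- For n ≥ 3, the path P_n satisfies J*(P_n) = 3. -/
/-! Colouring `P_n` by residues mod 3 gives a J*-colouring, since the closed neighbourhood of an
internal vertex `v` consists of the three consecutive vertices `v - 1, v, v + 1`. Conversely, the
closed neighbourhood of the internal vertex `1` has only three vertices, and it must meet every
colour class. -/

open SimpleGraph

lemma IsJStarCol.card_le {V : Type*} {G : SimpleGraph V} {k : ℕ} {c : V → Fin k}
    (hc : IsJStarCol G c) {v : V} (hv : ∃ a b, a ≠ b ∧ G.Adj v a ∧ G.Adj v b) {s : Finset V}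
    (hs : ∀ u, (u = v ∨ G.Adj v u) → u ∈ s) : k ≤ s.card := by
  have hsurj : Set.SurjOn c s Set.univ := fun i _ => by
    obtain ⟨u, hu, rfl⟩ := hc.2 v hv i
    exact ⟨u, hs u hu, rfl⟩
  simpa using Finset.card_le_card_of_surjOn (t := Finset.univ) c (by simpa using hsurj)

lemma pathGraph_eq_or_adj_iff {n : ℕ} {u v : Fin n} :
    (u = v ∨ (pathGraph n).Adj v u) ↔ v.val ≤ u.val + 1 ∧ u.val ≤ v.val + 1 := by
  rw [pathGraph_adj, Fin.ext_iff]
  omega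

lemma pathGraph_bounds_of_internal {n : ℕ} {v : Fin n}
    (hv : ∃ a b, a ≠ b ∧ (pathGraph n).Adj v a ∧ (pathGraph n).Adj v b) :
    0 < v.val ∧ v.val + 1 < n := by
  obtain ⟨a, b, hab, ha, hb⟩ := hv
  rw [pathGraph_adj] at ha hb
  have := a.isLt
  have := b.isLt
  have := Fin.val_ne_of_ne hab
  omega

lemma pathGraph_isJStarCol_mod_three (n : ℕ) :
    IsJStarCol (pathGraph n) (fun v => (⟨v.val % 3, Nat.mod_lt _ three_pos⟩ : Fin 3)) := by
  refine ⟨fun u v huv => ?_, fun v hv i => ?_⟩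
  · rw [pathGraph_adj] at huv
    rw [ne_eq, Fin.mk.injEq]
    omega
  · obtain ⟨hv₀, hvn⟩ := pathGraph_bounds_of_internal hv
    have hi := i.isLt
    obtain ⟨m, hm_lo, hm_hi, hm_mod⟩ :
        ∃ m, v.val ≤ m + 1 ∧ m ≤ v.val + 1 ∧ m % 3 = i.val :=
      ⟨v.val - 1 + (i.val + 3 - (v.val - 1) % 3) % 3, by omega, by omega, by omega⟩
    exact ⟨⟨m, by omega⟩, pathGraph_eq_or_adj_iff.2 ⟨hm_lo, hm_hi⟩, Fin.ext hm_mod⟩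

lemma pathGraph_le_three_of_hasJStarCol {n k : ℕ} (hn : 3 ≤ n)
    (hk : HasJStarCol (pathGraph n) k) : k ≤ 3 := by
  obtain ⟨c, hc⟩ := hk
  let v₁ : Fin n := ⟨1, by omega⟩
  let s : Finset (Fin n) := {⟨0, by omega⟩, v₁, ⟨2, by omega⟩}
  have hs : ∀ u, (u = v₁ ∨ (pathGraph n).Adj v₁ u) → u ∈ s := by
    intro u hu
    have hu₁ := pathGraph_eq_or_adj_iff.1 hu
    simp only [s, v₁, Finset.mem_insert, Finset.mem_singleton, Fin.ext_iff] at hu₁ ⊢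
    omega
  have h₁ : ∃ a b, a ≠ b ∧ (pathGraph n).Adj v₁ a ∧ (pathGraph n).Adj v₁ b :=
    ⟨⟨0, by omega⟩, ⟨2, by omega⟩, by simp [Fin.ext_iff], by simp [v₁, pathGraph_adj],
      by simp [v₁, pathGraph_adj]⟩
  exact (hc.card_le h₁ hs).trans Finset.card_le_three

/-- For `n ≥ 3`, the path `P_n` satisfies `J*(P_n) = 3`. -/
theorem path_JStarNum (n : ℕ) (hn : 3 ≤ n) :
    HasJStarCol (SimpleGraph.pathGraph n) 3 ∧
    JStarNum (SimpleGraph.pathGraph n) = 3 := by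
  have h3 : HasJStarCol (pathGraph n) 3 := ⟨_, pathGraph_isJStarCol_mod_three n⟩
  exact ⟨h3, IsGreatest.csSup_eq ⟨h3, fun _ hk => pathGraph_le_three_of_hasJStarCol hn hk⟩⟩
end

section
/- For n ≥ 3, the total graph T(P_n) of the path P_n satisfies J(T(P_n)) = 3. -/
open SimpleGraph

/-- The total graph `T(G)`: vertices are the vertices and edges of `G`; two elements
are adjacent iff they are adjacent or incident in `G`. -/
def totalGraph {V : Type*} (G : SimpleGraph V) : SimpleGraph (V ⊕ G.edgeSet) where
  Adj x y :=
    match x, y with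
    | Sum.inl u, Sum.inl v => G.Adj u v
    | Sum.inl u, Sum.inr e => u ∈ (e : Sym2 V)
    | Sum.inr e, Sum.inl u => u ∈ (e : Sym2 V)
    | Sum.inr e, Sum.inr f => e ≠ f ∧ ∃ u, u ∈ (e : Sym2 V) ∧ u ∈ (f : Sym2 V)
  symm := by
    constructor
    rintro (u | e) (v | f) h
    · exact h.symm
    · exact h
    · exact h
    · exact ⟨h.1.symm, by obtain ⟨_, hu, hf⟩ := h.2; exact ⟨_, hf, hu⟩⟩
  loopless := by constructor; rintro (u | e) h
                 · exact G.irrefl h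
                 · exact h.1 rfl

/-!
Put vertex `i` of `P_n` at position `2i` and the edge `{i, i+1}` at position `2i + 1`. Two
elements of `T(P_n)` are then adjacent exactly when their positions differ by 1 or 2, i.e.
`T(P_n)` is the square of the path on `2n - 1` vertices. Colouring by position mod 3 is a
J-colouring, because every closed neighbourhood contains three consecutive positions.
Conversely the end vertex at position 0 has a closed neighbourhood of size 3, which bounds
the number of colours of any J-colouring.
-/

open Fin.NatCast

section PathSquare

variable {V : Type*} {G : SimpleGraph V} {f : V → ℕ}

theorem isJCol_natCast_of_adj_iff
    (hadj : ∀ x y, G.Adj x y ↔ f x ≠ f y ∧ f x ≤ f y + 2 ∧ f y ≤ f x + 2)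
    {m : ℕ} (hm : 3 ≤ m) (hrange : Set.range f = Set.Iio m) :
    IsJCol G (fun x => (f x : Fin 3)) := by
  refine ⟨fun x y hxy => ?_, fun x i => ?_⟩
  · rw [hadj] at hxy
    simp only [ne_eq, Fin.ext_iff, Fin.val_natCast]
    omega
  · have hx : f x ∈ Set.Iio m := hrange ▸ Set.mem_range_self x
    rw [Set.mem_Iio] at hx
    -- the window `[s, s + 2]` contains `f x`, lies in `[0, m)`, and meets every residue mod 3
    set s := min (f x) (m - 3)
    obtain ⟨q, hsq, hqs, hqi⟩ : ∃ q, s ≤ q ∧ q ≤ s + 2 ∧ q % 3 = i :=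
      ⟨s + (i + 3 - s % 3) % 3, by omega, by omega, by omega⟩
    obtain ⟨y, hy⟩ : q ∈ Set.range f := hrange ▸ (show q < m by omega)
    have hcol : ((q : ℕ) : Fin 3) = i := Fin.ext (by simp [Fin.val_natCast, hqi])
    by_cases hxy : f x = q
    · exact ⟨x, Or.inl rfl, by simp only [hxy, hcol]⟩
    · exact ⟨y, Or.inr ((hadj x y).2 (by omega)), by simp only [hy, hcol]⟩

theorem IsJCol.le_three_of_adj_iff
    (hadj : ∀ x y, G.Adj x y ↔ f x ≠ f y ∧ f x ≤ f y + 2 ∧ f y ≤ f x + 2)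
    (hf : Function.Injective f) {x : V} (hx : f x = 0) {k : ℕ} {c : V → Fin k}
    (hc : IsJCol G c) : k ≤ 3 := by
  choose u hu hcu using hc.2 x
  have hlt : ∀ i, f (u i) < 3 := fun i => by
    rcases hu i with h | h
    · rw [h, hx]; omega
    · rw [hadj] at h; omega
  refine Fin.le_of_injective (fun i => ⟨f (u i), hlt i⟩) fun i j hij => ?_
  rw [← hcu i, ← hcu j, hf (Fin.mk.inj hij)]

theorem isGreatest_hasJCol_of_adj_iff
    (hadj : ∀ x y, G.Adj x y ↔ f x ≠ f y ∧ f x ≤ f y + 2 ∧ f y ≤ f x + 2)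
    (hf : Function.Injective f) {m : ℕ} (hm : 3 ≤ m) (hrange : Set.range f = Set.Iio m) :
    IsGreatest {k | HasJCol G k} 3 := by
  obtain ⟨x, hx⟩ : 0 ∈ Set.range f := hrange ▸ (show 0 < m by omega)
  exact ⟨⟨_, isJCol_natCast_of_adj_iff hadj hm hrange⟩,
    fun _ ⟨_, hc⟩ => hc.le_three_of_adj_iff hadj hf hx⟩

end PathSquare

theorem pathGraph_exists_eq_of_mem_edgeSet {n : ℕ} {e : Sym2 (Fin n)}
    (he : e ∈ (pathGraph n).edgeSet) : ∃ a b : Fin n, (b : ℕ) = a + 1 ∧ e = s(a, b) := by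
  induction e with
  | _ a b =>
    rcases pathGraph_adj.1 he with h | h
    · exact ⟨a, b, h.symm, rfl⟩
    · exact ⟨b, a, h.symm, Sym2.eq_swap⟩

def totalPathPos {n : ℕ} : Fin n ⊕ (pathGraph n).edgeSet → ℕ
  | .inl v => v + v
  | .inr e => Sym2.lift ⟨fun a b : Fin n => (a + b : ℕ), fun _ _ => add_comm _ _⟩ e.1

@[simp]
theorem totalPathPos_inl {n : ℕ} (v : Fin n) : totalPathPos (.inl v) = v + v := rfl

@[simp]
theorem totalPathPos_inr {n : ℕ} (a b : Fin n) (h : s(a, b) ∈ (pathGraph n).edgeSet) :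
    totalPathPos (.inr ⟨s(a, b), h⟩) = a + b := rfl

theorem totalGraph_pathGraph_adj_iff {n : ℕ} (x y : Fin n ⊕ (pathGraph n).edgeSet) :
    (totalGraph (pathGraph n)).Adj x y ↔ totalPathPos x ≠ totalPathPos y ∧
      totalPathPos x ≤ totalPathPos y + 2 ∧ totalPathPos y ≤ totalPathPos x + 2 := by
  rcases x with u | ⟨e, he⟩ <;> rcases y with v | ⟨e', he'⟩
  · simp only [totalGraph, pathGraph_adj, totalPathPos_inl]
    omega
  · obtain ⟨a, b, hab, rfl⟩ := pathGraph_exists_eq_of_mem_edgeSet he'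
    simp only [totalGraph, Sym2.mem_iff, Fin.ext_iff, totalPathPos_inl, totalPathPos_inr]
    omega
  · obtain ⟨a, b, hab, rfl⟩ := pathGraph_exists_eq_of_mem_edgeSet he
    simp only [totalGraph, Sym2.mem_iff, Fin.ext_iff, totalPathPos_inl, totalPathPos_inr]
    omega
  · obtain ⟨a, b, hab, rfl⟩ := pathGraph_exists_eq_of_mem_edgeSet he
    obtain ⟨a', b', hab', rfl⟩ := pathGraph_exists_eq_of_mem_edgeSet he'
    simp only [totalGraph, ne_eq, Subtype.mk.injEq, Sym2.eq_iff, Sym2.mem_iff, totalPathPos_inr]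
    constructor
    · rintro ⟨hne, w, hw, hw'⟩
      simp only [Fin.ext_iff] at hne hw hw'
      omega
    · intro h
      refine ⟨by simp only [Fin.ext_iff]; omega, ?_⟩
      rcases Nat.lt_or_ge (a : ℕ) a' with h' | h'
      · exact ⟨b, Or.inr rfl, Or.inl (Fin.ext (by omega))⟩
      · exact ⟨a, Or.inl rfl, Or.inr (Fin.ext (by omega))⟩

theorem totalPathPos_injective {n : ℕ} : Function.Injective (totalPathPos (n := n)) := by
  rintro (u | ⟨e, he⟩) (v | ⟨e', he'⟩) h
  · simp only [totalPathPos_inl] at h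
    exact congrArg _ (Fin.ext (by omega))
  · obtain ⟨a, b, hab, rfl⟩ := pathGraph_exists_eq_of_mem_edgeSet he'
    simp only [totalPathPos_inl, totalPathPos_inr] at h
    omega
  · obtain ⟨a, b, hab, rfl⟩ := pathGraph_exists_eq_of_mem_edgeSet he
    simp only [totalPathPos_inl, totalPathPos_inr] at h
    omega
  · obtain ⟨a, b, hab, rfl⟩ := pathGraph_exists_eq_of_mem_edgeSet he
    obtain ⟨a', b', hab', rfl⟩ := pathGraph_exists_eq_of_mem_edgeSet he'
    simp only [totalPathPos_inr] at h
    have ha : a = a' := Fin.ext (by omega)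
    have hb : b = b' := Fin.ext (by omega)
    subst ha hb
    rfl

theorem range_totalPathPos (n : ℕ) : Set.range (totalPathPos (n := n)) = Set.Iio (2 * n - 1) := by
  ext q
  simp only [Set.mem_range, Set.mem_Iio]
  constructor
  · rintro ⟨u | ⟨e, he⟩, rfl⟩
    · simp only [totalPathPos_inl]
      omega
    · obtain ⟨a, b, hab, rfl⟩ := pathGraph_exists_eq_of_mem_edgeSet he
      simp only [totalPathPos_inr]
      omega
  · intro hq
    obtain ⟨j, rfl | rfl⟩ := Nat.even_or_odd' q
    · exact ⟨.inl ⟨j, by omega⟩, by simp only [totalPathPos_inl]; omega⟩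
    · have he : s(⟨j, by omega⟩, ⟨j + 1, by omega⟩) ∈ (pathGraph n).edgeSet :=
        pathGraph_adj.2 (Or.inl rfl)
      exact ⟨.inr ⟨_, he⟩, by simp only [totalPathPos_inr]; omega⟩

/-- For `n ≥ 3`, the total graph of the path `P_n` satisfies `J(T(P_n)) = 3`. -/
theorem totalGraph_path_Jnum (n : ℕ) (hn : 3 ≤ n) :
    HasJCol (totalGraph (SimpleGraph.pathGraph n)) 3 ∧
    Jnum (totalGraph (SimpleGraph.pathGraph n)) = 3 := by
  have h := isGreatest_hasJCol_of_adj_iff totalGraph_pathGraph_adj_iff totalPathPos_injective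
    (by omega) (range_totalPathPos n)
  exact ⟨h.1, h.csSup_eq⟩
end

section
/- For the complete graph K_n with n even and n/2 ≤ k ≤ n, the minimum number of edges whose removal yields a graph with J-chromatic number k is n − k; i.e., r_k^-(K_n) = n − k. -/
/-!
Removing a set `E` of edges from `K_n` leaves a graph whose colour classes are cliques of the
removed edges; choosing one representative per colour class, every other vertex `v` is joined to
the representative of its class by a removed edge, and distinct such vertices give distinct edges.
Hence a proper colouring with `k` colours of `K_n - E` forces `|E| ≥ n - k`.

Conversely, when `n = 2m + r` with `k = m + r`, removing a matching of `m` edges from `K_n`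
leaves the complete multipartite graph with `m` parts of size two and `r` parts of size one. In a
complete multipartite graph a J-colouring must be constant on parts: if `u` missed the colour of a
vertex `v` of its part, that colour would appear on a neighbour `w` of `u` outside the part, and
then `w` and `v` would be adjacent vertices of the same colour. So its only J-colourings use
exactly one colour per part, and `J = k`.
-/

open SimpleGraph

section LowerBound

variable {V α : Type*} [Finite V] [Finite α]

theorem card_sub_card_le_ncard_of_coloring {E : Set (Sym2 V)}
    (C : ((⊤ : SimpleGraph V).deleteEdges E).Coloring α) :
    Nat.card V - Nat.card α ≤ E.ncard := by
  obtain _ | _ := isEmpty_or_nonempty V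
  · simp
  set rep : V → V := fun v => Function.invFun C (C v)
  have hrep : ∀ v, C (rep v) = C v := fun v => Function.invFun_eq ⟨v, rfl⟩
  have hrep_congr : ∀ {v w}, C v = C w → rep v = rep w := fun h => congrArg (Function.invFun C) h
  set S := {v | rep v ≠ v}
  have hS : S.ncard ≤ E.ncard := by
    refine Set.ncard_le_ncard_of_injOn (fun v => s(v, rep v)) ?_ ?_ (Set.toFinite E)
    · intro v hv
      by_contra hvE
      exact C.valid (by rw [deleteEdges_adj, top_adj]; exact ⟨Ne.symm hv, hvE⟩) (hrep v).symm
    · intro v hv w _ hvw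
      rcases Sym2.eq_iff.mp hvw with ⟨h, -⟩ | ⟨hv_eq, hw_eq⟩
      · exact h
      · have hC : C v = C w := by rw [hv_eq, hrep]
        exact absurd (by rw [hrep_congr hC, ← hv_eq]) hv
  have hSc : Sᶜ.ncard ≤ Nat.card α := by
    rw [← Set.ncard_univ α]
    refine Set.ncard_le_ncard_of_injOn C (fun _ _ => Set.mem_univ _) ?_
    intro v hv w hw hvw
    rw [← not_not.mp hv, ← not_not.mp hw, hrep_congr hvw]
  have := Set.ncard_add_ncard_compl S
  omega

end LowerBound
section CompleteMultipartite

variable {V : Type*} {k : ℕ} {p : V → Fin k}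

theorem isJCol_comap_top (hp : Function.Surjective p) :
    IsJCol ((⊤ : SimpleGraph (Fin k)).comap p) p := by
  refine ⟨fun u v huv => huv, fun v i => ?_⟩
  obtain ⟨u, rfl⟩ := hp i
  by_cases h : p v = p u
  · exact ⟨v, Or.inl rfl, h⟩
  · exact ⟨u, Or.inr h, rfl⟩

theorem IsJCol.eq_iff_of_comap_top {k' : ℕ} {c : V → Fin k'}
    (hc : IsJCol ((⊤ : SimpleGraph (Fin k)).comap p) c) {u v : V} :
    c u = c v ↔ p u = p v := by
  have hsame : ∀ {u v}, c u = c v → p u = p v := fun h => by_contra fun hne => hc.1 _ _ hne h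
  refine ⟨hsame, fun hpuv => ?_⟩
  obtain ⟨w, rfl | huw, hw⟩ := hc.2 u (c v)
  · exact hw
  · exact absurd (hpuv.trans (hsame hw).symm) huw

theorem IsJCol.eq_of_comap_top [Nonempty V] (hp : Function.Surjective p) {k' : ℕ}
    {c : V → Fin k'} (hc : IsJCol ((⊤ : SimpleGraph (Fin k)).comap p) c) : k' = k := by
  have hbij : Function.Bijective fun i => c (Function.surjInv hp i) := by
    refine ⟨fun i j hij => ?_, fun i' => ?_⟩
    · simpa [Function.surjInv_eq] using hc.eq_iff_of_comap_top.mp hij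
    · obtain ⟨u, -, rfl⟩ := hc.2 (Classical.arbitrary V) i'
      exact ⟨p u, hc.eq_iff_of_comap_top.mpr (Function.surjInv_eq hp _)⟩
  simpa using (Nat.card_eq_of_bijective _ hbij).symm

theorem jnum_comap_top (hp : Function.Surjective p) :
    Jnum ((⊤ : SimpleGraph (Fin k)).comap p) = k := by
  obtain hV | hV := isEmpty_or_nonempty V
  · have hk : k = 0 := by
      by_contra hk
      exact isEmptyElim (hp ⟨0, Nat.pos_of_ne_zero hk⟩).choose
    have hall : {k' | HasJCol ((⊤ : SimpleGraph (Fin k)).comap p) k'} = Set.univ :=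
      Set.eq_univ_of_forall fun _ => ⟨isEmptyElim, fun u => isEmptyElim u, fun v => isEmptyElim v⟩
    simp [Jnum, hall, hk]
  · have hk : {k' | HasJCol ((⊤ : SimpleGraph (Fin k)).comap p) k'} = {k} := by
      ext k'
      exact ⟨fun ⟨_, hc⟩ => hc.eq_of_comap_top hp, by rintro rfl; exact ⟨p, isJCol_comap_top hp⟩⟩
    simp [Jnum, hk]

end CompleteMultipartite

section PairMatching

variable {m r : ℕ}

def collapsePairs (m r : ℕ) (v : Fin (2 * m + r)) : Fin (m + r) :=
  if v.1 < 2 * m then ⟨v.1 / 2, by omega⟩ else ⟨v.1 - m, by omega⟩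

def pairEdge (m r : ℕ) (j : Fin m) : Sym2 (Fin (2 * m + r)) :=
  s(⟨2 * j, by omega⟩, ⟨2 * j + 1, by omega⟩)

theorem collapsePairs_val (v : Fin (2 * m + r)) :
    (collapsePairs m r v).1 = if v.1 < 2 * m then v.1 / 2 else v.1 - m := by
  unfold collapsePairs
  split_ifs <;> rfl

theorem collapsePairs_surjective : Function.Surjective (collapsePairs m r) := by
  intro i
  by_cases h : i.1 < m
  · exact ⟨⟨2 * i, by omega⟩, Fin.ext (by simp only [collapsePairs_val]; split_ifs <;> omega)⟩
  · exact ⟨⟨i + m, by omega⟩, Fin.ext (by simp only [collapsePairs_val]; split_ifs <;> omega)⟩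

theorem pairEdge_injective : Function.Injective (pairEdge m r) := by
  intro i j h
  simp only [pairEdge, Sym2.eq_iff, Fin.ext_iff] at h
  omega

theorem range_pairEdge_subset :
    Set.range (pairEdge m r) ⊆ (⊤ : SimpleGraph (Fin (2 * m + r))).edgeSet := by
  rintro _ ⟨j, rfl⟩
  simp [pairEdge]

theorem mem_range_pairEdge_iff {u v : Fin (2 * m + r)} :
    s(u, v) ∈ Set.range (pairEdge m r) ↔ u ≠ v ∧ collapsePairs m r u = collapsePairs m r v := by
  simp only [Set.mem_range, pairEdge, Sym2.eq_iff, Fin.ext_iff, ne_eq, collapsePairs_val]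
  constructor
  · rintro ⟨j, h⟩
    split_ifs <;> omega
  · rintro ⟨huv, h⟩
    split_ifs at h
    · exact ⟨⟨u / 2, by omega⟩, by simp only; omega⟩
    all_goals omega

theorem deleteEdges_range_pairEdge :
    (⊤ : SimpleGraph (Fin (2 * m + r))).deleteEdges (Set.range (pairEdge m r)) =
      (⊤ : SimpleGraph (Fin (m + r))).comap (collapsePairs m r) := by
  ext u v
  simp only [deleteEdges_adj, top_adj, comap_adj, mem_range_pairEdge_iff]
  exact ⟨fun ⟨huv, h⟩ hc => h ⟨huv, hc⟩, fun h => ⟨fun e => h (e ▸ rfl), fun h' => h h'.2⟩⟩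

end PairMatching

/-- For `K_n` with `n` even and `n/2 ≤ k ≤ n`, the minimum number of edges whose
removal yields a graph with J-chromatic number `k` is `n - k`. -/
theorem complete_rMinus (n k : ℕ) (hne : Even n) (hk : n / 2 ≤ k) (hkn : k ≤ n) :
    IsLeast {m : ℕ | ∃ E' : Set (Sym2 (Fin n)),
      E' ⊆ (⊤ : SimpleGraph (Fin n)).edgeSet ∧ E'.ncard = m ∧
      HasJCol ((⊤ : SimpleGraph (Fin n)).deleteEdges E') k ∧
      Jnum ((⊤ : SimpleGraph (Fin n)).deleteEdges E') = k} (n - k) := by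
  obtain ⟨m, r, rfl, rfl⟩ : ∃ m r, n = 2 * m + r ∧ k = m + r := by
    obtain ⟨t, rfl⟩ := hne
    exact ⟨t + t - k, k - (t + t - k), by omega, by omega⟩
  rw [show 2 * m + r - (m + r) = m by omega]
  refine ⟨⟨Set.range (pairEdge m r), range_pairEdge_subset, ?_, ?_, ?_⟩, ?_⟩
  · simp [Set.ncard_range_of_injective pairEdge_injective]
  · rw [deleteEdges_range_pairEdge]
    exact ⟨_, isJCol_comap_top collapsePairs_surjective⟩
  · rw [deleteEdges_range_pairEdge]
    exact jnum_comap_top collapsePairs_surjective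
  · rintro _ ⟨E, -, rfl, ⟨c, hc⟩, -⟩
    have := card_sub_card_le_ncard_of_coloring (Coloring.mk c fun h => hc.1 _ _ h)
    simp only [Nat.card_eq_fintype_card, Fintype.card_fin] at this
    omega
end
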